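/- Let u, 𝒩 : ℝ × ℝⁿ → ℂ be smooth functions on an open set Ω ⊆ ℝ × ℝⁿ satisfying i∂ₜu + Δu = 𝒩 on Ω. Define the momentum density T_{0j} := 2 Im( ū ∂_j u ) and the linearized momentum current L_{jk} := −∂_j∂_k(|u|²) + 4 Re( ∂_j ū · ∂_k u ) for 1 ≤ j,k ≤ n. Then for every 1 ≤ j ≤ n and every point of Ω, ∂ₜ T_{0j} + Σ_{k=1}^{n} ∂_k L_{jk} = 2 Re( 𝒩 ∂_j ū − u ∂_j 𝒩̄ ), i.e. ∂ₜ T_{0j} + Σ_k ∂_k L_{jk} = 2 {𝒩, u}_p^j. -/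

import Mathlib

open MeasureTheory Real Complex
open scoped FourierTransform ENNReal ContDiff

noncomputable section

/-- The `j`-th partial derivative of a function on `EuclideanSpace ℝ (Fin n)`. -/
def pd {n : ℕ} {F : Type*} [NormedAddCommGroup F] [NormedSpace ℝ F]
    (j : Fin n) (f : EuclideanSpace ℝ (Fin n) → F) (x : EuclideanSpace ℝ (Fin n)) : F :=
  fderiv ℝ f x (EuclideanSpace.single j 1)

/-- The Laplacian. -/
def lap {n : ℕ} {F : Type*} [NormedAddCommGroup F] [NormedSpace ℝ F]
    (f : EuclideanSpace ℝ (Fin n) → F) (x : EuclideanSpace ℝ (Fin n)) : F :=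
  ∑ j, pd j (pd j f) x

/-- `f` coincides with a (complex-valued) Schwartz function. -/
def IsSchwartz {n : ℕ} (f : EuclideanSpace ℝ (Fin n) → ℂ) : Prop :=
  ∃ g : SchwartzMap (EuclideanSpace ℝ (Fin n)) ℂ, ⇑g = f

/-- `f` coincides with a (real-valued) Schwartz function. -/
def IsSchwartzR {n : ℕ} (f : EuclideanSpace ℝ (Fin n) → ℝ) : Prop :=
  ∃ g : SchwartzMap (EuclideanSpace ℝ (Fin n)) ℝ, ⇑g = f

/-- A (smooth, spatially Schwartz) solution of the defocusing cubic NLS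
`i ∂ₜ u + Δ u = |u|² u` on `[0,T] × ℝⁿ`. -/
def IsNLSSolution (n : ℕ) (T : ℝ) (u : ℝ → EuclideanSpace ℝ (Fin n) → ℂ) : Prop :=
  ContDiff ℝ ∞ (Function.uncurry u) ∧
  (∀ t ∈ Set.Icc (0:ℝ) T, IsSchwartz (u t)) ∧
  (∀ t ∈ Set.Icc (0:ℝ) T, ∀ x, Complex.I * deriv (fun s => u s x) t + lap (u t) x
      = (‖u t x‖ : ℂ)^2 * u t x)

/-- Inhomogeneous Sobolev norm via the Fourier transform. -/
def HsNorm {n : ℕ} (σ : ℝ) (f : EuclideanSpace ℝ (Fin n) → ℂ) : ℝ :=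
  (∫ ξ, (1 + ‖ξ‖) ^ (2 * σ) * ‖𝓕 f ξ‖ ^ 2) ^ ((1:ℝ)/2)

/-- Homogeneous Sobolev norm via the Fourier transform. -/
def HdotNorm {n : ℕ} (σ : ℝ) (f : EuclideanSpace ℝ (Fin n) → ℂ) : ℝ :=
  (∫ ξ, ‖ξ‖ ^ (2 * σ) * ‖𝓕 f ξ‖ ^ 2) ^ ((1:ℝ)/2)

/-- The Fourier multiplier operator with (real) symbol `m`. -/
def fourierMult {n : ℕ} (m : EuclideanSpace ℝ (Fin n) → ℝ) (f : EuclideanSpace ℝ (Fin n) → ℂ) :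
    EuclideanSpace ℝ (Fin n) → ℂ :=
  𝓕⁻ (fun ξ => (m ξ : ℂ) * 𝓕 f ξ)

/-- The standing hypotheses on the radial profile `φ` of the symbol of the smoothing
operator `I = I_N`, with derivative-bound constants `Ck` (independent of `N`). -/
structure IMultiplier (s N : ℝ) (Ck : ℕ → ℝ) (φ : ℝ → ℝ) : Prop where
  contDiff : ContDiffOn ℝ ∞ φ (Set.Ioi 0)
  pos : ∀ r > (0:ℝ), 0 < φ r
  le_one : ∀ r > (0:ℝ), φ r ≤ 1
  anti : AntitoneOn φ (Set.Ioi 0)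
  eq_one : ∀ r : ℝ, 0 < r → r ≤ N → φ r = 1
  eq_pow : ∀ r : ℝ, 2 * N ≤ r → φ r = (r / N) ^ (s - 1)
  mono_mul : MonotoneOn (fun r => r * φ r) (Set.Ioi 0)
  deriv_bound : ∀ k : ℕ, 1 ≤ k → ∀ r > (0:ℝ), |iteratedDeriv k φ r| ≤ Ck k * φ r * r ^ (-(k:ℝ))

/-- The smoothing operator `I = I_N`, a Fourier multiplier with symbol `φ (|ξ|)`. -/
def Iop {n : ℕ} (φ : ℝ → ℝ) (f : EuclideanSpace ℝ (Fin n) → ℂ) : EuclideanSpace ℝ (Fin n) → ℂ :=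
  fourierMult (fun ξ => φ ‖ξ‖) f

/-- The operator `⟨D⟩ I_N`, a Fourier multiplier with symbol `(1 + |ξ|) φ (|ξ|)`. -/
def DIop {n : ℕ} (φ : ℝ → ℝ) (f : EuclideanSpace ℝ (Fin n) → ℂ) : EuclideanSpace ℝ (Fin n) → ℂ :=
  fourierMult (fun ξ => (1 + ‖ξ‖) * φ ‖ξ‖) f

/-- Mixed space-time norm `‖v‖_{L^q_{[0,T]} L^r_x}` (with values in `ℝ≥0∞`). -/
def mixNorm {α : Type*} [MeasureSpace α] {F : Type*} [NormedAddCommGroup F]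
    (T : ℝ) (q r : ℝ≥0∞) (v : ℝ → α → F) : ℝ≥0∞ :=
  eLpNorm (fun t => (eLpNorm (v t) r volume).toReal) q (volume.restrict (Set.Ioc 0 T))

/-- An admissible pair in `ℝ²`: `1/q + 1/r = 1/2` and `2 < q ≤ ∞`. -/
def Admissible (q r : ℝ≥0∞) : Prop := 1/q + 1/r = 1/2 ∧ 2 < q

/-- The `L²` norm. -/
def L2Norm {n : ℕ} (f : EuclideanSpace ℝ (Fin n) → ℂ) : ℝ :=
  (∫ x, ‖f x‖ ^ 2) ^ ((1:ℝ)/2)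

/-- The `L²` norm of the (spatial) gradient. -/
def gradL2Norm {n : ℕ} (f : EuclideanSpace ℝ (Fin n) → ℂ) : ℝ :=
  (∫ x, ∑ j, ‖pd j f x‖ ^ 2) ^ ((1:ℝ)/2)

/-- Space-time `L⁴_{[0,T]} L⁴_x` norm (real-valued). -/
def L4L4Norm {n : ℕ} (T : ℝ) (v : ℝ → EuclideanSpace ℝ (Fin n) → ℂ) : ℝ :=
  (∫ t in Set.Ioc (0:ℝ) T, ∫ x, ‖v t x‖ ^ 4) ^ ((1:ℝ)/4)

/-- The modified energy `E(v) = ½∫|∇v|² + ¼∫|v|⁴`. -/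
def energy {n : ℕ} (v : EuclideanSpace ℝ (Fin n) → ℂ) : ℝ :=
  (1/2) * (∫ x, ∑ j, ‖pd j v x‖ ^ 2) + (1/4) * ∫ x, ‖v x‖ ^ 4

/-- The Morawetz action `M_a(t) = 2 ∫ ∇a · Im (ū ∇u) dx`. -/
def morAction {n : ℕ} (a : EuclideanSpace ℝ (Fin n) → ℝ)
    (u : ℝ → EuclideanSpace ℝ (Fin n) → ℂ) (t : ℝ) : ℝ :=
  2 * ∫ x, ∑ j, pd j a x * ((starRingEnd ℂ) (u t x) * pd j (u t) x).im

/-- All derivatives of `a` grow at most polynomially. -/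
def PolyGrowth {n : ℕ} (a : EuclideanSpace ℝ (Fin n) → ℝ) : Prop :=
  ∀ k : ℕ, ∃ C d : ℝ, ∀ x, ‖iteratedFDeriv ℝ k a x‖ ≤ C * (1 + ‖x‖) ^ d

section DvAux

variable {V F : Type*} [NormedAddCommGroup V] [NormedSpace ℝ V]
  [NormedAddCommGroup F] [NormedSpace ℝ F]

/-- Directional derivative operator. -/
def Dv (v : V) (f : V → F) (q : V) : F := fderiv ℝ f q v

lemma Dv_congr {f g : V → F} {x : V} (h : f =ᶠ[nhds x] g) (v : V) :
    Dv v f x = Dv v g x := by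
  unfold Dv; rw [h.fderiv_eq]

lemma Dv_smooth {Ω : Set V} (hΩ : IsOpen Ω) {f : V → F} (hf : ContDiffOn ℝ ∞ f Ω) (v : V) :
    ContDiffOn ℝ ∞ (Dv v f) Ω :=
  (hf.fderiv_of_isOpen hΩ (le_of_eq rfl)).clm_apply contDiffOn_const

lemma le_infty_1 : (1 : WithTop ℕ∞) ≤ (∞ : WithTop ℕ∞) := WithTop.coe_le_coe.2 le_top
lemma le_infty_2 : (2 : WithTop ℕ∞) ≤ (∞ : WithTop ℕ∞) := WithTop.coe_le_coe.2 le_top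

lemma Dv_diffAt {Ω : Set V} (hΩ : IsOpen Ω) {f : V → F} (hf : ContDiffOn ℝ ∞ f Ω)
    {q : V} (hq : q ∈ Ω) : DifferentiableAt ℝ f q :=
  (hf.contDiffAt (hΩ.mem_nhds hq)).differentiableAt (by simp)

lemma Dv_swap {f : V → F} {x : V} (hf : ContDiffAt ℝ 2 f x) (v w : V) :
    Dv v (Dv w f) x = Dv w (Dv v f) x := by
  have hd : DifferentiableAt ℝ (fderiv ℝ f) x :=
    (hf.fderiv_right (m := 1) (le_refl _)).differentiableAt one_ne_zero
  have h1 : ∀ a b : V, Dv a (Dv b f) x = fderiv ℝ (fderiv ℝ f) x a b := by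
    intro a b
    have : (fun y => fderiv ℝ f y b) = fun y => (fderiv ℝ f y) b := rfl
    unfold Dv
    rw [fderiv_clm_apply hd (differentiableAt_const b)]
    simp
  rw [h1, h1]
  exact hf.isSymmSndFDerivAt (by simp) v w

lemma Dv_add {f g : V → F} {x : V} (hf : DifferentiableAt ℝ f x)
    (hg : DifferentiableAt ℝ g x) (v : V) :
    Dv v (fun y => f y + g y) x = Dv v f x + Dv v g x := by
  unfold Dv; rw [fderiv_fun_add hf hg]; rfl

lemma Dv_neg {f : V → F} {x : V} (v : V) :
    Dv v (fun y => -f y) x = -Dv v f x := by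
  unfold Dv; rw [fderiv_fun_neg]; rfl

lemma Dv_sum {ι : Type*} (s : Finset ι) {f : ι → V → F} {x : V}
    (hf : ∀ i ∈ s, DifferentiableAt ℝ (f i) x) (v : V) :
    Dv v (fun y => ∑ i ∈ s, f i y) x = ∑ i ∈ s, Dv v (f i) x := by
  unfold Dv; rw [fderiv_fun_sum hf]; simp

lemma Dv_const_mul {f : V → ℂ} {x : V} (c : ℂ) (hf : DifferentiableAt ℝ f x) (v : V) :
    Dv v (fun y => c * f y) x = c * Dv v f x := by
  unfold Dv; rw [fderiv_const_mul hf c]; simp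

lemma Dv_mul {f g : V → ℂ} {x : V} (hf : DifferentiableAt ℝ f x)
    (hg : DifferentiableAt ℝ g x) (v : V) :
    Dv v (fun y => f y * g y) x = Dv v f x * g x + f x * Dv v g x := by
  unfold Dv; rw [fderiv_fun_mul hf hg]
  simp only [ContinuousLinearMap.add_apply, ContinuousLinearMap.smul_apply, smul_eq_mul]
  ring

lemma Dv_conj {f : V → ℂ} {x : V} (v : V) :
    Dv v (fun y => (starRingEnd ℂ) (f y)) x = (starRingEnd ℂ) (Dv v f x) := by
  unfold Dv
  have : (fun y => (starRingEnd ℂ) (f y)) = fun y => star (f y) := rfl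
  rw [this, fderiv_star, starRingEnd_apply]
  rfl

lemma Dv_re {f : V → ℂ} {x : V} (hf : DifferentiableAt ℝ f x) (v : V) :
    Dv v (fun y => (f y).re) x = (Dv v f x).re := by
  unfold Dv
  have h : HasFDerivAt (fun y => (f y).re) (Complex.reCLM.comp (fderiv ℝ f x)) x :=
    (Complex.reCLM.hasFDerivAt.comp x hf.hasFDerivAt)
  rw [h.fderiv]; rfl

lemma Dv_im {f : V → ℂ} {x : V} (hf : DifferentiableAt ℝ f x) (v : V) :
    Dv v (fun y => (f y).im) x = (Dv v f x).im := by
  unfold Dv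
  have h : HasFDerivAt (fun y => (f y).im) (Complex.imCLM.comp (fderiv ℝ f x)) x :=
    (Complex.imCLM.hasFDerivAt.comp x hf.hasFDerivAt)
  rw [h.fderiv]; rfl

end DvAux

section SliceAux

variable {n : ℕ} {F : Type*} [NormedAddCommGroup F] [NormedSpace ℝ F]

local notation "E" => EuclideanSpace ℝ (Fin n)

/-- Spatial coordinate direction in `ℝ × E`. -/
def ee {n : ℕ} (k : Fin n) : ℝ × EuclideanSpace ℝ (Fin n) := ((0:ℝ), EuclideanSpace.single k 1)

/-- Time direction in `ℝ × E`. -/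
def tv (n : ℕ) : ℝ × EuclideanSpace ℝ (Fin n) := ((1:ℝ), 0)

lemma pd_slice {f : ℝ × E → F} {t : ℝ} {x : E} (hf : DifferentiableAt ℝ f (t, x)) (k : Fin n) :
    pd k (fun y => f (t, y)) x = Dv (ee k) f (t, x) := by
  have h : HasFDerivAt (fun y : E => f (t, y))
      ((fderiv ℝ f (t, x)).comp (ContinuousLinearMap.inr ℝ ℝ E)) x :=
    hf.hasFDerivAt.comp x (hasFDerivAt_prodMk_right t x)
  unfold pd
  rw [h.fderiv]; rfl

lemma deriv_slice {f : ℝ × E → F} {t : ℝ} {x : E} (hf : DifferentiableAt ℝ f (t, x)) :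
    deriv (fun s => f (s, x)) t = Dv (tv n) f (t, x) := by
  have h2 : HasFDerivAt (fun s : ℝ => f (s, x))
      ((fderiv ℝ f (t, x)).comp (ContinuousLinearMap.inl ℝ ℝ E)) t :=
    hf.hasFDerivAt.comp t (hasFDerivAt_prodMk_left t x)
  have h3 := h2.hasDerivAt
  have : deriv (fun s : ℝ => f (s, x)) t
      = ((fderiv ℝ f (t, x)).comp (ContinuousLinearMap.inl ℝ ℝ E)) 1 := h3.deriv
  rw [this]; rfl

lemma mem_nhds_slice {Ω : Set (ℝ × E)} (hΩ : IsOpen Ω) {t : ℝ} {x : E} (hq : (t, x) ∈ Ω) :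
    {y : E | (t, y) ∈ Ω} ∈ nhds x := by
  have : Continuous (fun y : E => (t, y)) := Continuous.prodMk continuous_const continuous_id
  exact (hΩ.preimage this).mem_nhds hq

lemma pd_slice_on {Ω : Set (ℝ × E)} (hΩ : IsOpen Ω) {f : ℝ × E → F}
    (hf : ContDiffOn ℝ ∞ f Ω) {t : ℝ} {x : E} (hq : (t, x) ∈ Ω) (k : Fin n) {g : E → F}
    (hg : ∀ y, (t, y) ∈ Ω → g y = f (t, y)) :
    pd k g x = Dv (ee k) f (t, x) := by
  have hev : g =ᶠ[nhds x] fun y => f (t, y) := by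
    filter_upwards [mem_nhds_slice hΩ hq] with y hy using hg y hy
  unfold pd
  rw [hev.fderiv_eq]
  exact pd_slice (Dv_diffAt hΩ hf hq) k

lemma deriv_slice_on {Ω : Set (ℝ × E)} (hΩ : IsOpen Ω) {f : ℝ × E → F}
    (hf : ContDiffOn ℝ ∞ f Ω) {t : ℝ} {x : E} (hq : (t, x) ∈ Ω) {g : ℝ → F}
    (hg : ∀ s, (s, x) ∈ Ω → g s = f (s, x)) :
    deriv g t = Dv (tv n) f (t, x) := by
  have hmem : {s : ℝ | (s, x) ∈ Ω} ∈ nhds t := by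
    have : Continuous (fun s : ℝ => (s, x)) := Continuous.prodMk continuous_id continuous_const
    exact (hΩ.preimage this).mem_nhds hq
  have hev : g =ᶠ[nhds t] fun s => f (s, x) := by
    filter_upwards [hmem] with s hs using hg s hs
  rw [hev.deriv_eq]
  exact deriv_slice (Dv_diffAt hΩ hf hq)

lemma norm_sq_eq_conj_mul_re (w : ℂ) : ‖w‖^2 = ((starRingEnd ℂ) w * w).re := by
  rw [Complex.sq_norm, Complex.normSq_apply, Complex.mul_re,
    Complex.conj_re, Complex.conj_im]
  ring

lemma Dv_const_mul_r {V : Type*} [NormedAddCommGroup V] [NormedSpace ℝ V]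
    {f : V → ℝ} {x : V} (c : ℝ) (hf : DifferentiableAt ℝ f x) (v : V) :
    Dv v (fun y => c * f y) x = c * Dv v f x := by
  unfold Dv; rw [fderiv_const_mul hf c]; simp

end SliceAux

section AlgAux

lemma sum_push_left {ι : Type*} (s : Finset ι) (g : ι → ℂ) (b : ℂ) :
    2*((starRingEnd ℂ) (∑ i ∈ s, g i) * b).re = ∑ i ∈ s, 2*((starRingEnd ℂ) (g i) * b).re := by
  rw [map_sum, Finset.sum_mul, Complex.re_sum, Finset.mul_sum]

lemma sum_push_right {ι : Type*} (s : Finset ι) (g : ι → ℂ) (c : ℂ) :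
    2*(c * ∑ i ∈ s, g i).re = ∑ i ∈ s, 2*(c * g i).re := by
  rw [Finset.mul_sum, Complex.re_sum, Finset.mul_sum]

lemma final_alg (a aj Np Nj Sd Sm : ℂ) :
    (2*((starRingEnd ℂ) (-Complex.I*Np + Complex.I*Sd) * aj).im
      + 2*((starRingEnd ℂ) a * (-Complex.I*Nj + Complex.I*Sm)).im)
      + (2*((starRingEnd ℂ) Sd * aj).re - 2*((starRingEnd ℂ) a * Sm).re)
    = 2*(Np * (starRingEnd ℂ) aj - a * (starRingEnd ℂ) Nj).re := by
  simp only [map_add, map_mul, map_neg, Complex.conj_I, Complex.mul_im, Complex.mul_re,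
    Complex.add_im, Complex.add_re, Complex.sub_re, Complex.neg_im, Complex.neg_re,
    Complex.I_re, Complex.I_im, Complex.conj_re, Complex.conj_im, Complex.sub_im]
  ring

end AlgAux

/-- Local conservation law for the momentum density: on an open set `Ω` where
`i ∂ₜ u + Δ u = 𝒩`, one has `∂ₜ T_{0j} + ∑ₖ ∂ₖ L_{jk} = 2 {𝒩, u}_p^j`. -/
theorem momentum_local_conservation {n : ℕ} (u 𝒩 : ℝ → EuclideanSpace ℝ (Fin n) → ℂ)
    (Ω : Set (ℝ × EuclideanSpace ℝ (Fin n))) (hΩ : IsOpen Ω)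
    (hu : ContDiffOn ℝ ∞ (Function.uncurry u) Ω)
    (hN : ContDiffOn ℝ ∞ (Function.uncurry 𝒩) Ω)
    (heq : ∀ p ∈ Ω, Complex.I * deriv (fun s => u s p.2) p.1 + lap (u p.1) p.2 = 𝒩 p.1 p.2) :
    ∀ p ∈ Ω, ∀ j : Fin n,
      deriv (fun s => 2 * ((starRingEnd ℂ) (u s p.2) * pd j (u s) p.2).im) p.1
      + ∑ k, pd k (fun y => - pd j (pd k (fun z => ‖u p.1 z‖ ^ 2)) y
          + 4 * ((starRingEnd ℂ) (pd j (u p.1) y) * pd k (u p.1) y).re) p.2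
      = 2 * (𝒩 p.1 p.2 * pd j (fun z => (starRingEnd ℂ) (u p.1 z)) p.2
           - u p.1 p.2 * pd j (fun z => (starRingEnd ℂ) (𝒩 p.1 z)) p.2).re := by
  intro p hp j
  obtain ⟨t₀, x₀⟩ := p
  dsimp only at hp ⊢
  set U := Function.uncurry u with hUdef
  set NN := Function.uncurry 𝒩 with hNNdef
  -- smoothness/differentiability helpers
  have hdA : ∀ v, ContDiffOn ℝ ∞ (Dv v U) Ω := fun v => Dv_smooth hΩ hu v
  have hdB : ∀ v w, ContDiffOn ℝ ∞ (Dv v (Dv w U)) Ω := fun v w => Dv_smooth hΩ (hdA w) v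
  have hst : ∀ {f : ℝ × EuclideanSpace ℝ (Fin n) → ℂ}, ContDiffOn ℝ ∞ f Ω →
      ContDiffOn ℝ ∞ (fun q => (starRingEnd ℂ) (f q)) Ω :=
    fun hf => (Complex.conjCLE : ℂ →L[ℝ] ℂ).contDiff.comp_contDiffOn hf
  have hre : ∀ {f : ℝ × EuclideanSpace ℝ (Fin n) → ℂ}, ContDiffOn ℝ ∞ f Ω →
      ContDiffOn ℝ ∞ (fun q => (f q).re) Ω :=
    fun hf => Complex.reCLM.contDiff.comp_contDiffOn hf
  have hdf : ∀ {f : ℝ × EuclideanSpace ℝ (Fin n) → ℂ} {q}, ContDiffOn ℝ ∞ f Ω → q ∈ Ω →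
      DifferentiableAt ℝ f q := fun hf hq => Dv_diffAt hΩ hf hq
  -- flattened PDE
  have hPDE : ∀ t x, (t, x) ∈ Ω →
      Complex.I * Dv (tv n) U (t, x) + ∑ k, Dv (ee k) (Dv (ee k) U) (t, x) = 𝒩 t x := by
    intro t x htx
    have h0 := heq (t, x) htx
    dsimp only at h0
    have h1 : deriv (fun s => u s x) t = Dv (tv n) U (t, x) :=
      deriv_slice_on hΩ hu htx (fun s hs => rfl)
    have h2 : ∀ k : Fin n, pd k (pd k (u t)) x = Dv (ee k) (Dv (ee k) U) (t, x) := fun k =>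
      pd_slice_on hΩ (hdA (ee k)) htx k
        (fun y hy => pd_slice_on hΩ hu hy k (fun z hz => rfl))
    have h3 : lap (u t) x = ∑ k, Dv (ee k) (Dv (ee k) U) (t, x) := by
      unfold lap
      exact Finset.sum_congr rfl (fun k _ => h2 k)
    rw [h1, h3] at h0
    exact h0
  -- time term
  have hG : ContDiffOn ℝ ∞ (fun q => 2 * ((starRingEnd ℂ) (U q) * Dv (ee j) U q).im) Ω := by
    exact contDiffOn_const.mul
      (Complex.imCLM.contDiff.comp_contDiffOn ((hst hu).mul (hdA (ee j))))
  have hT : deriv (fun s => 2 * ((starRingEnd ℂ) (u s x₀) * pd j (u s) x₀).im) t₀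
      = Dv (tv n) (fun q => 2 * ((starRingEnd ℂ) (U q) * Dv (ee j) U q).im) (t₀, x₀) := by
    refine deriv_slice_on hΩ hG hp (fun s hs => ?_)
    rw [pd_slice_on (g := u s) hΩ hu hs j (fun z hz => rfl)]
    rfl
  have dU : DifferentiableAt ℝ U (t₀, x₀) := hdf hu hp
  have dcU : DifferentiableAt ℝ (fun q => (starRingEnd ℂ) (U q)) (t₀, x₀) := hdf (hst hu) hp
  have dAj : DifferentiableAt ℝ (Dv (ee j) U) (t₀, x₀) := hdf (hdA (ee j)) hp
  have dprodT : DifferentiableAt ℝ (fun q => (starRingEnd ℂ) (U q) * Dv (ee j) U q) (t₀, x₀) :=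
    dcU.mul dAj
  have hTval : Dv (tv n) (fun q => 2 * ((starRingEnd ℂ) (U q) * Dv (ee j) U q).im) (t₀, x₀)
      = 2 * ((starRingEnd ℂ) (Dv (tv n) U (t₀, x₀)) * Dv (ee j) U (t₀, x₀)).im
        + 2 * ((starRingEnd ℂ) (U (t₀, x₀)) * Dv (tv n) (Dv (ee j) U) (t₀, x₀)).im := by
    rw [Dv_const_mul_r 2
        (by exact (Complex.imCLM.differentiable.differentiableAt).comp (t₀, x₀) dprodT),
      Dv_im dprodT, Dv_mul dcU dAj, Dv_conj, Complex.add_im]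
    ring
  -- rearranged PDE, everywhere on Ω
  have hDtU : ∀ q ∈ Ω, Dv (tv n) U q
      = -Complex.I * NN q + Complex.I * ∑ k, Dv (ee k) (Dv (ee k) U) q := by
    intro q hq
    obtain ⟨t, x⟩ := q
    have h := hPDE t x hq
    have hb : NN (t, x) = 𝒩 t x := rfl
    rw [hb]
    linear_combination (-Complex.I) * h + (Dv (tv n) U (t, x)) * Complex.I_mul_I
  have hAt : Dv (tv n) U (t₀, x₀)
      = -Complex.I * 𝒩 t₀ x₀ + Complex.I * ∑ k, Dv (ee k) (Dv (ee k) U) (t₀, x₀) := by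
    have h := hPDE t₀ x₀ hp
    linear_combination (-Complex.I) * h + (Dv (tv n) U (t₀, x₀)) * Complex.I_mul_I
  have hAtj : Dv (tv n) (Dv (ee j) U) (t₀, x₀)
      = -Complex.I * Dv (ee j) NN (t₀, x₀)
        + Complex.I * ∑ k, Dv (ee j) (Dv (ee k) (Dv (ee k) U)) (t₀, x₀) := by
    have hsw : Dv (tv n) (Dv (ee j) U) (t₀, x₀) = Dv (ee j) (Dv (tv n) U) (t₀, x₀) :=
      Dv_swap ((hu.contDiffAt (hΩ.mem_nhds hp)).of_le le_infty_2) (tv n) (ee j)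
    rw [hsw]
    have hev : Dv (tv n) U =ᶠ[nhds (t₀, x₀)]
        fun q => -Complex.I * NN q + Complex.I * ∑ k, Dv (ee k) (Dv (ee k) U) q := by
      filter_upwards [hΩ.mem_nhds hp] with q hq using hDtU q hq
    rw [Dv_congr hev (ee j)]
    have d6 : DifferentiableAt ℝ
        (fun q => ∑ k, Dv (ee k) (Dv (ee k) U) q) (t₀, x₀) :=
      DifferentiableAt.fun_sum (fun k _ => hdf (hdB (ee k) (ee k)) hp)
    rw [Dv_add (by exact (hdf hN hp).const_mul (-Complex.I)) (by exact d6.const_mul Complex.I),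
      Dv_const_mul (-Complex.I) (hdf hN hp), Dv_const_mul Complex.I d6,
      Dv_sum _ (fun k _ => hdf (hdB (ee k) (ee k)) hp)]
  -- RHS slices
  have hR1 : pd j (fun z => (starRingEnd ℂ) (u t₀ z)) x₀
      = (starRingEnd ℂ) (Dv (ee j) U (t₀, x₀)) := by
    rw [pd_slice_on (g := fun z => (starRingEnd ℂ) (u t₀ z)) hΩ (hst hu) hp j (fun y hy => rfl), Dv_conj]
  have hR2 : pd j (fun z => (starRingEnd ℂ) (𝒩 t₀ z)) x₀
      = (starRingEnd ℂ) (Dv (ee j) NN (t₀, x₀)) := by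
    rw [pd_slice_on (g := fun z => (starRingEnd ℂ) (𝒩 t₀ z)) hΩ (hst hN) hp j (fun y hy => rfl), Dv_conj]
  -- spatial term
  have hL : ∀ k : Fin n,
      pd k (fun y => - pd j (pd k (fun z => ‖u t₀ z‖ ^ 2)) y
          + 4 * ((starRingEnd ℂ) (pd j (u t₀) y) * pd k (u t₀) y).re) x₀
      = 2 * ((starRingEnd ℂ) (Dv (ee k) (Dv (ee k) U) (t₀, x₀)) * Dv (ee j) U (t₀, x₀)).re
        - 2 * ((starRingEnd ℂ) (U (t₀, x₀)) * Dv (ee j) (Dv (ee k) (Dv (ee k) U)) (t₀, x₀)).re := by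
    intro k
    have hPsm : ContDiffOn ℝ ∞ (fun q => (starRingEnd ℂ) (Dv (ee k) U q) * U q
        + (starRingEnd ℂ) (U q) * Dv (ee k) U q) Ω :=
      ((hst (hdA (ee k))).mul hu).add ((hst hu).mul (hdA (ee k)))
    have c1 : ∀ y, (t₀, y) ∈ Ω → pd k (fun z => ‖u t₀ z‖ ^ 2) y
        = ((fun q => (starRingEnd ℂ) (Dv (ee k) U q) * U q
            + (starRingEnd ℂ) (U q) * Dv (ee k) U q) (t₀, y)).re := by
      intro y hy
      have e0 : (fun z => ‖u t₀ z‖ ^ 2) = fun z => ((starRingEnd ℂ) (u t₀ z) * u t₀ z).re := by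
        funext z; exact norm_sq_eq_conj_mul_re _
      rw [e0, pd_slice_on (g := fun z => ((starRingEnd ℂ) (u t₀ z) * u t₀ z).re)
          (f := fun q => ((starRingEnd ℂ) (U q) * U q).re) hΩ
          (by exact hre ((hst hu).mul hu)) hy k (fun z hz => rfl),
        Dv_re ((hdf (hst hu) hy).fun_mul (hdf hu hy)),
        Dv_mul (hdf (hst hu) hy) (hdf hu hy), Dv_conj]
    have c2 : ∀ y, (t₀, y) ∈ Ω → pd j (pd k (fun z => ‖u t₀ z‖ ^ 2)) y
        = (Dv (ee j) (fun q => (starRingEnd ℂ) (Dv (ee k) U q) * U q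
            + (starRingEnd ℂ) (U q) * Dv (ee k) U q) (t₀, y)).re := by
      intro y hy
      rw [pd_slice_on (f := fun q => ((fun q' => (starRingEnd ℂ) (Dv (ee k) U q') * U q'
            + (starRingEnd ℂ) (U q') * Dv (ee k) U q') q).re) hΩ
          (by exact hre hPsm) hy j c1,
        Dv_re (hdf hPsm hy)]
    have c3 : ∀ y, (t₀, y) ∈ Ω → pd j (u t₀) y = Dv (ee j) U (t₀, y) := fun y hy =>
      pd_slice_on (g := u t₀) hΩ hu hy j (fun z hz => rfl)
    have c4 : ∀ y, (t₀, y) ∈ Ω → pd k (u t₀) y = Dv (ee k) U (t₀, y) := fun y hy =>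
      pd_slice_on (g := u t₀) hΩ hu hy k (fun z hz => rfl)
    have hΨsm : ContDiffOn ℝ ∞ (fun q => -(Dv (ee j) (fun q' => (starRingEnd ℂ) (Dv (ee k) U q') * U q'
          + (starRingEnd ℂ) (U q') * Dv (ee k) U q') q).re
        + 4 * ((starRingEnd ℂ) (Dv (ee j) U q) * Dv (ee k) U q).re) Ω :=
      ((hre (Dv_smooth hΩ hPsm (ee j))).neg).add
        (contDiffOn_const.mul (hre ((hst (hdA (ee j))).mul (hdA (ee k)))))
    have c5 : pd k (fun y => - pd j (pd k (fun z => ‖u t₀ z‖ ^ 2)) y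
          + 4 * ((starRingEnd ℂ) (pd j (u t₀) y) * pd k (u t₀) y).re) x₀
        = Dv (ee k) (fun q => -(Dv (ee j) (fun q' => (starRingEnd ℂ) (Dv (ee k) U q') * U q'
              + (starRingEnd ℂ) (U q') * Dv (ee k) U q') q).re
            + 4 * ((starRingEnd ℂ) (Dv (ee j) U q) * Dv (ee k) U q).re) (t₀, x₀) := by
      refine pd_slice_on hΩ hΨsm hp k (fun y hy => ?_)
      rw [c2 y hy, c3 y hy, c4 y hy]
    have dP : DifferentiableAt ℝ (Dv (ee j) (fun q' => (starRingEnd ℂ) (Dv (ee k) U q') * U q'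
        + (starRingEnd ℂ) (U q') * Dv (ee k) U q')) (t₀, x₀) := hdf (Dv_smooth hΩ hPsm (ee j)) hp
    have dAk : DifferentiableAt ℝ (Dv (ee k) U) (t₀, x₀) := hdf (hdA (ee k)) hp
    have dcAj : DifferentiableAt ℝ (fun q => (starRingEnd ℂ) (Dv (ee j) U q)) (t₀, x₀) :=
      hdf (hst (hdA (ee j))) hp
    have dcAk : DifferentiableAt ℝ (fun q => (starRingEnd ℂ) (Dv (ee k) U q)) (t₀, x₀) :=
      hdf (hst (hdA (ee k))) hp
    have dprod : DifferentiableAt ℝ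
        (fun q => (starRingEnd ℂ) (Dv (ee j) U q) * Dv (ee k) U q) (t₀, x₀) := dcAj.mul dAk
    have c6 : Dv (ee k) (fun q => -(Dv (ee j) (fun q' => (starRingEnd ℂ) (Dv (ee k) U q') * U q'
            + (starRingEnd ℂ) (U q') * Dv (ee k) U q') q).re
          + 4 * ((starRingEnd ℂ) (Dv (ee j) U q) * Dv (ee k) U q).re) (t₀, x₀)
        = -(Dv (ee k) (Dv (ee j) (fun q' => (starRingEnd ℂ) (Dv (ee k) U q') * U q'
            + (starRingEnd ℂ) (U q') * Dv (ee k) U q')) (t₀, x₀)).re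
          + 4 * ((starRingEnd ℂ) (Dv (ee k) (Dv (ee j) U) (t₀, x₀)) * Dv (ee k) U (t₀, x₀)
            + (starRingEnd ℂ) (Dv (ee j) U (t₀, x₀)) * Dv (ee k) (Dv (ee k) U) (t₀, x₀)).re := by
      rw [Dv_add (by exact ((Complex.reCLM.differentiable.differentiableAt).comp (t₀, x₀) dP).neg)
          (by exact ((Complex.reCLM.differentiable.differentiableAt).comp (t₀, x₀) dprod).const_mul 4),
        Dv_neg, Dv_re dP,
        Dv_const_mul_r 4 (by exact (Complex.reCLM.differentiable.differentiableAt).comp (t₀, x₀) dprod),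
        Dv_re dprod, Dv_mul dcAj dAk, Dv_conj]
    have c7 : ∀ q ∈ Ω, Dv (ee j) (fun q' => (starRingEnd ℂ) (Dv (ee k) U q') * U q'
          + (starRingEnd ℂ) (U q') * Dv (ee k) U q') q
        = ((starRingEnd ℂ) (Dv (ee j) (Dv (ee k) U) q) * U q
            + (starRingEnd ℂ) (Dv (ee k) U q) * Dv (ee j) U q)
          + ((starRingEnd ℂ) (Dv (ee j) U q) * Dv (ee k) U q
            + (starRingEnd ℂ) (U q) * Dv (ee j) (Dv (ee k) U) q) := by
      intro q hq
      rw [Dv_add (by exact (hdf (hst (hdA (ee k))) hq).mul (hdf hu hq))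
          (by exact (hdf (hst hu) hq).mul (hdf (hdA (ee k)) hq)),
        Dv_mul (hdf (hst (hdA (ee k))) hq) (hdf hu hq),
        Dv_mul (hdf (hst hu) hq) (hdf (hdA (ee k)) hq), Dv_conj, Dv_conj]
    have dB : DifferentiableAt ℝ (Dv (ee j) (Dv (ee k) U)) (t₀, x₀) := hdf (hdB (ee j) (ee k)) hp
    have dcB : DifferentiableAt ℝ
        (fun q => (starRingEnd ℂ) (Dv (ee j) (Dv (ee k) U) q)) (t₀, x₀) :=
      hdf (hst (hdB (ee j) (ee k))) hp
    have c8 : Dv (ee k) (Dv (ee j) (fun q' => (starRingEnd ℂ) (Dv (ee k) U q') * U q'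
          + (starRingEnd ℂ) (U q') * Dv (ee k) U q')) (t₀, x₀)
        = Dv (ee k) (fun q => ((starRingEnd ℂ) (Dv (ee j) (Dv (ee k) U) q) * U q
            + (starRingEnd ℂ) (Dv (ee k) U q) * Dv (ee j) U q)
          + ((starRingEnd ℂ) (Dv (ee j) U q) * Dv (ee k) U q
            + (starRingEnd ℂ) (U q) * Dv (ee j) (Dv (ee k) U) q)) (t₀, x₀) := by
      refine Dv_congr ?_ (ee k)
      filter_upwards [hΩ.mem_nhds hp] with q hq using c7 q hq
    have c9 : Dv (ee k) (fun q => ((starRingEnd ℂ) (Dv (ee j) (Dv (ee k) U) q) * U q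
            + (starRingEnd ℂ) (Dv (ee k) U q) * Dv (ee j) U q)
          + ((starRingEnd ℂ) (Dv (ee j) U q) * Dv (ee k) U q
            + (starRingEnd ℂ) (U q) * Dv (ee j) (Dv (ee k) U) q)) (t₀, x₀)
        = (((starRingEnd ℂ) (Dv (ee k) (Dv (ee j) (Dv (ee k) U)) (t₀, x₀)) * U (t₀, x₀)
            + (starRingEnd ℂ) (Dv (ee j) (Dv (ee k) U) (t₀, x₀)) * Dv (ee k) U (t₀, x₀))
          + ((starRingEnd ℂ) (Dv (ee k) (Dv (ee k) U) (t₀, x₀)) * Dv (ee j) U (t₀, x₀)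
            + (starRingEnd ℂ) (Dv (ee k) U (t₀, x₀)) * Dv (ee k) (Dv (ee j) U) (t₀, x₀)))
          + (((starRingEnd ℂ) (Dv (ee k) (Dv (ee j) U) (t₀, x₀)) * Dv (ee k) U (t₀, x₀)
            + (starRingEnd ℂ) (Dv (ee j) U (t₀, x₀)) * Dv (ee k) (Dv (ee k) U) (t₀, x₀))
          + ((starRingEnd ℂ) (Dv (ee k) U (t₀, x₀)) * Dv (ee j) (Dv (ee k) U) (t₀, x₀)
            + (starRingEnd ℂ) (U (t₀, x₀)) * Dv (ee k) (Dv (ee j) (Dv (ee k) U)) (t₀, x₀))) := by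
      rw [Dv_add (by exact (dcB.mul dU).add (dcAk.mul dAj))
          (by exact (dcAj.mul dAk).add (dcU.mul dB)),
        Dv_add (dcB.fun_mul dU) (dcAk.fun_mul dAj), Dv_add (dcAj.fun_mul dAk) (dcU.fun_mul dB),
        Dv_mul dcB dU, Dv_mul dcAk dAj, Dv_mul dcAj dAk, Dv_mul dcU dB,
        Dv_conj, Dv_conj, Dv_conj, Dv_conj]
    have sym1 : Dv (ee j) (Dv (ee k) U) (t₀, x₀) = Dv (ee k) (Dv (ee j) U) (t₀, x₀) :=
      Dv_swap ((hu.contDiffAt (hΩ.mem_nhds hp)).of_le le_infty_2) (ee j) (ee k)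
    have sym2 : Dv (ee k) (Dv (ee j) (Dv (ee k) U)) (t₀, x₀)
        = Dv (ee j) (Dv (ee k) (Dv (ee k) U)) (t₀, x₀) :=
      Dv_swap (((hdA (ee k)).contDiffAt (hΩ.mem_nhds hp)).of_le le_infty_2) (ee k) (ee j)
    rw [c5, c6, c8, c9, sym2, sym1]
    simp only [Complex.add_re, Complex.mul_re, Complex.sub_re, Complex.conj_re, Complex.conj_im]
    ring
  -- assembly
  have hb1 : u t₀ x₀ = U (t₀, x₀) := rfl
  have hb2 : 𝒩 t₀ x₀ = NN (t₀, x₀) := rfl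
  have hb3 : 𝒩 t₀ x₀ = NN (t₀, x₀) := rfl
  rw [hT, hTval, Finset.sum_congr rfl (fun k _ => hL k), hR1, hR2, hAt, hAtj,
    Finset.sum_sub_distrib, ← sum_push_left, ← sum_push_right, hb1]
  exact final_alg (U (t₀, x₀)) (Dv (ee j) U (t₀, x₀)) (𝒩 t₀ x₀) (Dv (ee j) NN (t₀, x₀))
    (∑ k, Dv (ee k) (Dv (ee k) U) (t₀, x₀))
    (∑ k, Dv (ee j) (Dv (ee k) (Dv (ee k) U)) (t₀, x₀))

end
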